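/- arXiv:1111.4675 — 3 statements merged into one kernel-verified Lean document; each statement's English description precedes it below -/
import Mathlib

section
/- Let R₁₂ = R(ξ₁,ξ₂) be of the U(1)^{N−1}-invariant form and R₂₁ = P R(ξ₂,ξ₁) P, and assume the unitarity relation R₁₂ R₂₁ = I. Define 𝓕₁₂ = Σ_{1≤α₁≤α₂≤N} e^{(α₁α₁)}⊗e^{(α₂α₂)} + Σ_{1≤α₂<α₁≤N} (e^{(α₁α₁)}⊗e^{(α₂α₂)}) R₁₂, define 𝓕₂₁ = Σ_{1≤α₂≤α₁≤N} e^{(α₁α₁)}⊗e^{(α₂α₂)} + Σ_{1≤α₁<α₂≤N} (e^{(α₁α₁)}⊗e^{(α₂α₂)}) R₂₁, and let ℛ₁₂ be the diagonal matrix I⊗I + Σ_{i=1}^N (a_i(ξ₁,ξ₂) − 1) e^{(ii)}⊗e^{(ii)}. Then 𝓕₂₁ R₁₂ = ℛ₁₂ 𝓕₁₂. -/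
open Matrix Kronecker

/-- The N×N matrix unit `e^{(ij)}`. -/
def matE (K : Type*) [Semiring K] {N : ℕ} (i j : Fin N) : Matrix (Fin N) (Fin N) K :=
  Matrix.single i j 1

/-- The `U(1)^{N-1}`-invariant R-matrix built from weights `a, b, c`. -/
def Rmat {K : Type*} [CommRing K] {N : ℕ} (a : Fin N → K) (b c : Fin N → Fin N → K) :
    Matrix (Fin N × Fin N) (Fin N × Fin N) K :=
  ∑ i, a i • (matE K i i ⊗ₖ matE K i i)
    + ∑ i, ∑ j, if i ≠ j then b i j • (matE K i i ⊗ₖ matE K j j)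
        + c i j • (matE K i j ⊗ₖ matE K j i) else 0

/-- The permutation (swap) operator `P` on `ℂ^N ⊗ ℂ^N`. -/
def Pswap (K : Type*) [Semiring K] (N : ℕ) :
    Matrix (Fin N × Fin N) (Fin N × Fin N) K :=
  Matrix.of fun p q => if p.1 = q.2 ∧ p.2 = q.1 then 1 else 0

/-! Compare the two sides term by term, for each projector `e^{(pp)} ⊗ e^{(qq)}`. For `p < q`
unitarity collapses `e^{(pp)} ⊗ e^{(qq)} R₂₁ R₁₂` to the projector itself, which `ℛ₁₂` fixes since
`p ≠ q`; for `p = q` both sides are `a_p e^{(pp)} ⊗ e^{(pp)}`, because that projector picks out the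
`a_p` entry of the `U(1)`-invariant `R₁₂`; for `p > q` both sides are
`(e^{(pp)} ⊗ e^{(qq)}) R₁₂`, again because `ℛ₁₂` fixes off-diagonal projectors. -/

section MatrixUnits

variable {K : Type*} {N : ℕ}

lemma matE_mul_matE [Semiring K] (i j k l : Fin N) :
    matE K i j * matE K k l = if j = k then matE K i l else 0 := by
  split_ifs with h
  · subst h
    simp [matE]
  · simp [matE, h]

variable [CommRing K]

lemma diagUnit_mul_diagUnit (i j k l : Fin N) :
    (matE K i i ⊗ₖ matE K j j) * (matE K k k ⊗ₖ matE K l l)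
      = if i = k ∧ j = l then matE K i i ⊗ₖ matE K j j else 0 := by
  rw [← mul_kronecker_mul, matE_mul_matE, matE_mul_matE]
  by_cases hik : i = k <;> by_cases hjl : j = l <;> simp [hik, hjl]

lemma diagUnit_mul_swapUnit {p i j : Fin N} (hij : i ≠ j) :
    (matE K p p ⊗ₖ matE K p p) * (matE K i j ⊗ₖ matE K j i) = 0 := by
  rw [← mul_kronecker_mul, matE_mul_matE, matE_mul_matE]
  by_cases hpi : p = i <;> by_cases hpj : p = j <;> simp_all

lemma diagUnit_mul_Rmat (a : Fin N → K) (b c : Fin N → Fin N → K) (p : Fin N) :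
    (matE K p p ⊗ₖ matE K p p) * Rmat a b c = a p • (matE K p p ⊗ₖ matE K p p) := by
  have hoff : ∀ i j : Fin N, (matE K p p ⊗ₖ matE K p p) *
      (if i ≠ j then b i j • (matE K i i ⊗ₖ matE K j j)
        + c i j • (matE K i j ⊗ₖ matE K j i) else 0) = 0 := by
    intro i j
    split_ifs with hij
    · have hpp : ¬(p = i ∧ p = j) := by rintro ⟨rfl, rfl⟩; exact hij rfl
      rw [mul_add, Matrix.mul_smul, Matrix.mul_smul, diagUnit_mul_diagUnit, if_neg hpp,
        diagUnit_mul_swapUnit hij, smul_zero, smul_zero, add_zero]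
    · exact mul_zero _
  simp only [Rmat, mul_add, Finset.mul_sum, hoff, Matrix.mul_smul, diagUnit_mul_diagUnit, and_self,
    smul_ite, smul_zero, Finset.sum_ite_eq, Finset.mem_univ, if_true, Finset.sum_const_zero,
    add_zero]

lemma diagCorrection_mul_diagUnit (a : Fin N → K) (p q : Fin N) :
    ((1 : Matrix (Fin N × Fin N) (Fin N × Fin N) K)
        + ∑ i, (a i - 1) • (matE K i i ⊗ₖ matE K i i)) * (matE K p p ⊗ₖ matE K q q)
      = if p = q then a p • (matE K p p ⊗ₖ matE K q q) else matE K p p ⊗ₖ matE K q q := by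
  simp only [add_mul, one_mul, Finset.sum_mul, smul_mul, diagUnit_mul_diagUnit]
  split_ifs with hpq
  · subst hpq
    simp only [and_self, smul_ite, smul_zero, Finset.sum_ite_eq', Finset.mem_univ, if_true]
    rw [sub_smul, one_smul, add_sub_cancel]
  · have hne : ∀ i : Fin N, ¬(i = p ∧ i = q) := by rintro i ⟨rfl, rfl⟩; exact hpq rfl
    simp [hne]

end MatrixUnits

/-- The `L = 2` factorization condition for the F-matrix: `𝓕₂₁ R₁₂ = ℛ₁₂ 𝓕₁₂`, assuming
unitarity `R₁₂ R₂₁ = I`.  Here unprimed weights are at `(ξ₁,ξ₂)` and primed ones at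
`(ξ₂,ξ₁)`; `R₂₁ = P R(ξ₂,ξ₁) P` and `ℛ₁₂ = I + Σ_i (a_i − 1) e^{(ii)}⊗e^{(ii)}`. -/
theorem stmt5 {K : Type*} [CommRing K] {N : ℕ}
    (a a' : Fin N → K) (b b' c c' : Fin N → Fin N → K)
    (huni : Rmat a b c * (Pswap K N * Rmat a' b' c' * Pswap K N) = 1) :
    (∑ α₁ : Fin N, ∑ α₂ : Fin N,
        if α₂ ≤ α₁ then matE K α₁ α₁ ⊗ₖ matE K α₂ α₂
        else (matE K α₁ α₁ ⊗ₖ matE K α₂ α₂) * (Pswap K N * Rmat a' b' c' * Pswap K N))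
      * Rmat a b c
    = ((1 : Matrix (Fin N × Fin N) (Fin N × Fin N) K)
        + ∑ i, (a i - 1) • (matE K i i ⊗ₖ matE K i i))
      * (∑ α₁ : Fin N, ∑ α₂ : Fin N,
          if α₁ ≤ α₂ then matE K α₁ α₁ ⊗ₖ matE K α₂ α₂
          else (matE K α₁ α₁ ⊗ₖ matE K α₂ α₂) * Rmat a b c) := by
  have huni_comm := mul_eq_one_comm.mp huni
  simp only [Finset.sum_mul, Finset.mul_sum]
  refine Finset.sum_congr rfl fun p _ => Finset.sum_congr rfl fun q _ => ?_
  rcases lt_trichotomy p q with hpq | rfl | hqp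
  · rw [if_neg hpq.not_ge, if_pos hpq.le, mul_assoc, huni_comm, mul_one,
      diagCorrection_mul_diagUnit, if_neg hpq.ne]
  · rw [if_pos le_rfl, if_pos le_rfl, diagUnit_mul_Rmat, diagCorrection_mul_diagUnit, if_pos rfl]
  · rw [if_pos hqp.le, if_neg hqp.not_ge, ← mul_assoc, diagCorrection_mul_diagUnit,
      if_neg hqp.ne']
end

section
/- Let K be a field and let b₁₂, b₂₁, b₃₂, c₂₁, c₂₃, c₃₁, c₃₂ be K-valued functions of pairs of spectral parameters, with b₃₂(ξ₁,ξ₂) ≠ 0 and b₃₂(ξ₂,ξ₁) ≠ 0. Assume: (H1) b₃₂(ξ₁,ξ₂)c₂₃(ξ₂,ξ₁) + c₃₂(ξ₁,ξ₂)b₃₂(ξ₂,ξ₁) = 0; (H2) c₃₂(μ,ξ₂)c₂₁(μ,ξ₁)b₃₂(ξ₂,ξ₁) + b₃₂(μ,ξ₂)c₃₁(μ,ξ₁)c₂₃(ξ₂,ξ₁) = c₃₁(μ,ξ₂)b₃₂(μ,ξ₁)c₂₁(ξ₂,ξ₁); (H3) b₂₁(ξ₁,ξ₂)b₁₂(ξ₂,ξ₁)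 + c₂₁(ξ₁,ξ₂)c₂₁(ξ₂,ξ₁) = 1; (H4) b₁₂(μ,ξ₁)b₃₂(ξ₂,ξ₁) = b₃₂(μ,ξ₁)b₁₂(ξ₂,ξ₁). Then c₂₁(μ,ξ₁)c₃₂(μ,ξ₂)c₂₁(ξ₁,ξ₂) + b₁₂(μ,ξ₁)c₃₁(μ,ξ₂)b₂₁(ξ₁,ξ₂) − c₃₁(μ,ξ₁)b₃₂(μ,ξ₂)c₂₁(ξ₁,ξ₂)c₃₂(ξ₁,ξ₂)/b₃₂(ξ₁,ξ₂) = b₃₂(μ,ξ₁)c₃₁(μ,ξ₂)/b₃₂(ξ₂,ξ₁). -/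
/-- Simplification of the entry `κ₂^{(C₁)}` of the twisted operator `C̃^{(1)}`
of the 15-vertex model at `L = 2`, from unitarity relations (H1), (H3) and
Yang–Baxter relations (H2) of type YB10-{1,3,2} and (H4) of type YB3-{1,3,2}. -/
theorem stmt13 {K P : Type*} [Field K]
    (b₁₂ b₂₁ b₃₂ c₂₁ c₂₃ c₃₁ c₃₂ : P → P → K) (μ ξ₁ ξ₂ : P)
    (hb1 : b₃₂ ξ₁ ξ₂ ≠ 0) (hb2 : b₃₂ ξ₂ ξ₁ ≠ 0)
    (H1 : b₃₂ ξ₁ ξ₂ * c₂₃ ξ₂ ξ₁ + c₃₂ ξ₁ ξ₂ * b₃₂ ξ₂ ξ₁ = 0)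
    (H2 : c₃₂ μ ξ₂ * c₂₁ μ ξ₁ * b₃₂ ξ₂ ξ₁ + b₃₂ μ ξ₂ * c₃₁ μ ξ₁ * c₂₃ ξ₂ ξ₁
        = c₃₁ μ ξ₂ * b₃₂ μ ξ₁ * c₂₁ ξ₂ ξ₁)
    (H3 : b₂₁ ξ₁ ξ₂ * b₁₂ ξ₂ ξ₁ + c₂₁ ξ₁ ξ₂ * c₂₁ ξ₂ ξ₁ = 1)
    (H4 : b₁₂ μ ξ₁ * b₃₂ ξ₂ ξ₁ = b₃₂ μ ξ₁ * b₁₂ ξ₂ ξ₁) :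
    c₂₁ μ ξ₁ * c₃₂ μ ξ₂ * c₂₁ ξ₁ ξ₂ + b₁₂ μ ξ₁ * c₃₁ μ ξ₂ * b₂₁ ξ₁ ξ₂
      - c₃₁ μ ξ₁ * b₃₂ μ ξ₂ * c₂₁ ξ₁ ξ₂ * c₃₂ ξ₁ ξ₂ / b₃₂ ξ₁ ξ₂
      = b₃₂ μ ξ₁ * c₃₁ μ ξ₂ / b₃₂ ξ₂ ξ₁ := by
  field_simp
  linear_combination (c₂₁ ξ₁ ξ₂ * b₃₂ ξ₁ ξ₂) * H2
    - (c₂₁ ξ₁ ξ₂ * c₃₁ μ ξ₁ * b₃₂ μ ξ₂) * H1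
    + (c₃₁ μ ξ₂ * b₂₁ ξ₁ ξ₂ * b₃₂ ξ₁ ξ₂) * H4
    + (c₃₁ μ ξ₂ * b₃₂ μ ξ₁ * b₃₂ ξ₁ ξ₂) * H3
end

section
/- Let K be a field and let c₃₂, a₃, b₃₂, θ₂, θ₃ : P × P → K be functions of pairs of spectral parameters. For lists of distinct parameters ν₁,…,ν_L and ξ₁,…,ξ_L define Z_L({ν},{ξ}) = Σ_{σ∈S_L} ∏_{i=1}^{L} c₃₂(ν_i, ξ_{σ(i)}) · ∏_{1≤j<k≤L} [a₃(ν_j,ξ_{σ(k)}) b₃₂(ν_k,ξ_{σ(j)}) θ₃(ξ_{σ(k)},ξ_{σ(j)})] / [b₃₂(ξ_{σ(k)},ξ_{σ(j)}) θ₂(ξ_{σ(j)},ξ_{σ(k)})]. Then Z_L satisfies the recursion Z_L({ν},{ξ}) = Σ_{p=1}^{L} c₃₂(ν₁,ξ_p) · ∏_{i≠p} [a₃(ν₁,ξ_i) θ₃(ξ_i,ξ_p)] / [b₃₂(ξ_i,ξ_p) θ₂(ξ_p,ξ_i)] · ∏_{j=2}^{L} b₃₂(ν_j,ξ_p) ·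 Z_{L−1}({ν}∖{ν₁}, {ξ}∖{ξ_p}), with base case Z₁(ν₁,ξ₁) = c₃₂(ν₁,ξ₁), provided all the factors b₃₂(ξ_i,ξ_j) and θ₂(ξ_i,ξ_j) appearing in denominators are nonzero. -/
open BigOperators

/-- The explicit permutation-sum formula for the domain wall partition function
`Z^{(C,2)}_L` of the 15-vertex model. -/
def dwpfZ {K P : Type*} [Field K] (c₃₂ a₃ b₃₂ θ₂ θ₃ : P → P → K) :
    (L : ℕ) → (Fin L → P) → (Fin L → P) → K :=
  fun L ν ξ => ∑ σ : Equiv.Perm (Fin L),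
    (∏ i, c₃₂ (ν i) (ξ (σ i))) *
      ∏ j, ∏ k, if j < k then
        a₃ (ν j) (ξ (σ k)) * b₃₂ (ν k) (ξ (σ j)) * θ₃ (ξ (σ k)) (ξ (σ j)) /
          (b₃₂ (ξ (σ k)) (ξ (σ j)) * θ₂ (ξ (σ j)) (ξ (σ k)))
      else 1


def permOfFix {L : ℕ} (p : Fin (L + 1)) (τ : Equiv.Perm (Fin L)) :
    Equiv.Perm (Fin (L + 1)) :=
  (finSuccEquiv' 0).trans (τ.optionCongr.trans (finSuccEquiv' p).symm)

lemma permOfFix_zero {L : ℕ} (p : Fin (L + 1)) (τ : Equiv.Perm (Fin L)) :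
    permOfFix p τ 0 = p := by
  simp [permOfFix, finSuccEquiv'_at]

lemma permOfFix_succ {L : ℕ} (p : Fin (L + 1)) (τ : Equiv.Perm (Fin L)) (i : Fin L) :
    permOfFix p τ i.succ = p.succAbove (τ i) := by
  have h : (i.succ : Fin (L + 1)) = Fin.succAbove 0 i := (Fin.zero_succAbove i).symm
  rw [permOfFix, h]
  simp only [Equiv.trans_apply, finSuccEquiv'_succAbove, Equiv.optionCongr_apply,
    Option.map_some, finSuccEquiv'_symm_some]

lemma permOfFix_bij {L : ℕ} :
    Function.Bijective
      (fun pτ : Fin (L + 1) × Equiv.Perm (Fin L) => permOfFix pτ.1 pτ.2) := by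
  rw [Fintype.bijective_iff_injective_and_card]
  constructor
  · rintro ⟨p, τ⟩ ⟨p', τ'⟩ h
    simp only at h
    have h0 : p = p' := by
      have := congrArg (fun σ : Equiv.Perm (Fin (L + 1)) => σ 0) h
      simpa [permOfFix_zero] using this
    subst h0
    have hτ : τ = τ' := by
      apply Equiv.ext; intro i
      have := congrArg (fun σ : Equiv.Perm (Fin (L + 1)) => σ i.succ) h
      simp only [permOfFix_succ] at this
      exact Fin.succAbove_right_injective this
    rw [hτ]
  · simp [Fintype.card_perm, Nat.factorial_succ]

private theorem dwpf_rec {K P : Type*} [Field K] (c₃₂ a₃ b₃₂ θ₂ θ₃ : P → P → K)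
    (L : ℕ) (ν ξ : Fin (L + 1) → P) :
    (∑ σ : Equiv.Perm (Fin (L+1)),
    (∏ i, c₃₂ (ν i) (ξ (σ i))) *
      ∏ j, ∏ k, if j < k then
        a₃ (ν j) (ξ (σ k)) * b₃₂ (ν k) (ξ (σ j)) * θ₃ (ξ (σ k)) (ξ (σ j)) /
          (b₃₂ (ξ (σ k)) (ξ (σ j)) * θ₂ (ξ (σ j)) (ξ (σ k)))
      else 1)
      = ∑ p : Fin (L + 1),
          c₃₂ (ν 0) (ξ p)
            * (∏ i, if i = p then 1
                else a₃ (ν 0) (ξ i) * θ₃ (ξ i) (ξ p) / (b₃₂ (ξ i) (ξ p) * θ₂ (ξ p) (ξ i)))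
            * (∏ j : Fin L, b₃₂ (ν j.succ) (ξ p))
            * (∑ τ : Equiv.Perm (Fin L),
    (∏ i, c₃₂ ((ν ∘ Fin.succ) i) ((ξ ∘ p.succAbove) (τ i))) *
      ∏ j, ∏ k, if j < k then
        a₃ ((ν ∘ Fin.succ) j) ((ξ ∘ p.succAbove) (τ k)) * b₃₂ ((ν ∘ Fin.succ) k) ((ξ ∘ p.succAbove) (τ j)) * θ₃ ((ξ ∘ p.succAbove) (τ k)) ((ξ ∘ p.succAbove) (τ j)) /
          (b₃₂ ((ξ ∘ p.succAbove) (τ k)) ((ξ ∘ p.succAbove) (τ j)) * θ₂ ((ξ ∘ p.succAbove) (τ j)) ((ξ ∘ p.succAbove) (τ k)))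
      else 1) := by
  rw [← Fintype.sum_bijective _ permOfFix_bij _ _ (fun _ => rfl)]
  rw [Fintype.sum_prod_type]
  refine Finset.sum_congr rfl fun p _ => ?_
  rw [Finset.mul_sum]
  refine Finset.sum_congr rfl fun τ _ => ?_
  simp only [Fin.prod_univ_succ, permOfFix_zero, permOfFix_succ, Function.comp_apply,
    lt_self_iff_false, if_false, Fin.succ_pos, if_true, Fin.not_lt_zero, Fin.succ_lt_succ_iff, one_mul]
  have hA : ((if (0:Fin (L+1)) = p then (1:K)
        else a₃ (ν 0) (ξ 0) * θ₃ (ξ 0) (ξ p) / (b₃₂ (ξ 0) (ξ p) * θ₂ (ξ p) (ξ 0))) *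
      ∏ i : Fin L, if i.succ = p then 1
        else a₃ (ν 0) (ξ i.succ) * θ₃ (ξ i.succ) (ξ p) /
          (b₃₂ (ξ i.succ) (ξ p) * θ₂ (ξ p) (ξ i.succ)))
      = ∏ x : Fin L, a₃ (ν 0) (ξ (p.succAbove (τ x))) * θ₃ (ξ (p.succAbove (τ x))) (ξ p) /
          (b₃₂ (ξ (p.succAbove (τ x))) (ξ p) * θ₂ (ξ p) (ξ (p.succAbove (τ x)))) := by
    rw [← Fin.prod_univ_succ (fun i => if i = p then (1:K)
        else a₃ (ν 0) (ξ i) * θ₃ (ξ i) (ξ p) / (b₃₂ (ξ i) (ξ p) * θ₂ (ξ p) (ξ i))),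
      Fin.prod_univ_succAbove (fun i => if i = p then (1:K)
        else a₃ (ν 0) (ξ i) * θ₃ (ξ i) (ξ p) / (b₃₂ (ξ i) (ξ p) * θ₂ (ξ p) (ξ i))) p]
    rw [if_pos rfl, one_mul]
    have h1 : ∏ x : Fin L, (if p.succAbove x = p then (1:K)
        else a₃ (ν 0) (ξ (p.succAbove x)) * θ₃ (ξ (p.succAbove x)) (ξ p) /
          (b₃₂ (ξ (p.succAbove x)) (ξ p) * θ₂ (ξ p) (ξ (p.succAbove x))))
        = ∏ x : Fin L, a₃ (ν 0) (ξ (p.succAbove x)) * θ₃ (ξ (p.succAbove x)) (ξ p) /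
          (b₃₂ (ξ (p.succAbove x)) (ξ p) * θ₂ (ξ p) (ξ (p.succAbove x))) :=
      Finset.prod_congr rfl fun x _ => if_neg (Fin.succAbove_ne p x)
    rw [h1, ← Equiv.prod_comp τ (fun x => a₃ (ν 0) (ξ (p.succAbove x)) * θ₃ (ξ (p.succAbove x)) (ξ p) /
          (b₃₂ (ξ (p.succAbove x)) (ξ p) * θ₂ (ξ p) (ξ (p.succAbove x))))]
  have hB : (∏ x : Fin L,
      a₃ (ν 0) (ξ (p.succAbove (τ x))) * b₃₂ (ν x.succ) (ξ p) * θ₃ (ξ (p.succAbove (τ x))) (ξ p) /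
        (b₃₂ (ξ (p.succAbove (τ x))) (ξ p) * θ₂ (ξ p) (ξ (p.succAbove (τ x)))))
      = (∏ x : Fin L, b₃₂ (ν x.succ) (ξ p)) *
        ∏ x : Fin L, a₃ (ν 0) (ξ (p.succAbove (τ x))) * θ₃ (ξ (p.succAbove (τ x))) (ξ p) /
          (b₃₂ (ξ (p.succAbove (τ x))) (ξ p) * θ₂ (ξ p) (ξ (p.succAbove (τ x)))) := by
    rw [← Finset.prod_mul_distrib]
    exact Finset.prod_congr rfl fun x _ => by ring
  rw [hB, hA]
  generalize (∏ x : Fin L, a₃ (ν 0) (ξ (p.succAbove (τ x))) * θ₃ (ξ (p.succAbove (τ x))) (ξ p) /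
      (b₃₂ (ξ (p.succAbove (τ x))) (ξ p) * θ₂ (ξ p) (ξ (p.succAbove (τ x))))) = G
  generalize (∏ x : Fin L, ∏ x_1 : Fin L, if x < x_1 then
      a₃ (ν x.succ) (ξ (p.succAbove (τ x_1))) * b₃₂ (ν x_1.succ) (ξ (p.succAbove (τ x))) *
        θ₃ (ξ (p.succAbove (τ x_1))) (ξ (p.succAbove (τ x))) /
        (b₃₂ (ξ (p.succAbove (τ x_1))) (ξ (p.succAbove (τ x))) *
          θ₂ (ξ (p.succAbove (τ x))) (ξ (p.succAbove (τ x_1)))) else 1) = D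
  ring


/-- Proposition 4.1: the explicit permutation-sum formula for `Z^{(C,2)}_L`
satisfies the recurrence relation obtained by peeling off the first spectral
parameter `ν₁`, with base case `Z₁ = c₃₂(ν₁,ξ₁)`. -/
theorem stmt14 {K P : Type*} [Field K] (c₃₂ a₃ b₃₂ θ₂ θ₃ : P → P → K)
    (L : ℕ) (ν ξ : Fin (L + 1) → P)
    (hν : Function.Injective ν) (hξ : Function.Injective ξ)
    (hb : ∀ i j : Fin (L + 1), i ≠ j → b₃₂ (ξ i) (ξ j) ≠ 0)
    (hθ : ∀ i j : Fin (L + 1), i ≠ j → θ₂ (ξ i) (ξ j) ≠ 0) :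
    (dwpfZ c₃₂ a₃ b₃₂ θ₂ θ₃ (L + 1) ν ξ
      = ∑ p : Fin (L + 1),
          c₃₂ (ν 0) (ξ p)
            * (∏ i, if i = p then 1
                else a₃ (ν 0) (ξ i) * θ₃ (ξ i) (ξ p) / (b₃₂ (ξ i) (ξ p) * θ₂ (ξ p) (ξ i)))
            * (∏ j : Fin L, b₃₂ (ν j.succ) (ξ p))
            * dwpfZ c₃₂ a₃ b₃₂ θ₂ θ₃ L (ν ∘ Fin.succ) (ξ ∘ p.succAbove))
    ∧ ∀ ν₁ ξ₁ : Fin 1 → P, dwpfZ c₃₂ a₃ b₃₂ θ₂ θ₃ 1 ν₁ ξ₁ = c₃₂ (ν₁ 0) (ξ₁ 0) := by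
  constructor
  · simp only [dwpfZ]
    exact dwpf_rec c₃₂ a₃ b₃₂ θ₂ θ₃ L ν ξ
  · intro ν₁ ξ₁
    simp only [dwpfZ]
    rw [Finset.sum_eq_single (1 : Equiv.Perm (Fin 1))]
    · simp
    · intro σ _ hσ
      exact absurd (Subsingleton.elim σ 1) hσ
    · intro h
      exact absurd (Finset.mem_univ _) h
end
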